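/- arXiv:2512.06229 — 5 statements merged into one kernel-verified Lean document; each statement's English description precedes it below -/
import Mathlib

section
/- Let K' be a complete graph on N vertices with edges colored in p colors, and suppose each vertex v has a 'dominant' color c_v such that at least N − α of the edges at v have color c_v, where α is a nonnegative integer. For r = 0, …, p−1 let G_r be the set of vertices with dominant color r. Then |G₀|² + |G₁|² + ⋯ + |G_{p−1}|² ≥ N² − 2αN. -/
open Finset

/-- If every vertex has a dominant color covering all but at most `α` of its edges,
then the squares of the sizes of the dominant-color classes sum to at least `N² − 2αN`. -/
theorem dominant_classes_sq_sum (p : ℕ) [NeZero p] (α : ℕ) (V : Type*) [Fintype V]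
    [DecidableEq V] (χ : V → V → ZMod p) (hsym : ∀ x y, χ x y = χ y x)
    (c : V → ZMod p)
    (hdom : ∀ v : V, (Fintype.card V : ℤ) - α ≤
      ((univ.filter fun u => u ≠ v ∧ χ v u = c v).card : ℤ)) :
    (Fintype.card V : ℤ) ^ 2 - 2 * α * Fintype.card V ≤
      ∑ r : ZMod p, ((univ.filter fun v => c v = r).card : ℤ) ^ 2 := by
  classical
  set N := Fintype.card V with hN
  -- each "bad" set has size at most α
  have hbad : ∀ v : V, ((univ.filter fun u => u ≠ v ∧ χ v u ≠ c v).card : ℤ) ≤ α := by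
    intro v
    have hdisj : Disjoint (univ.filter fun u => u ≠ v ∧ χ v u = c v)
        (univ.filter fun u => u ≠ v ∧ χ v u ≠ c v) := by
      rw [Finset.disjoint_left]
      intro a ha hb
      simp only [mem_filter] at ha hb
      exact hb.2.2 ha.2.2
    have hle : (univ.filter fun u => u ≠ v ∧ χ v u = c v).card
        + (univ.filter fun u => u ≠ v ∧ χ v u ≠ c v).card ≤ N := by
      rw [← Finset.card_union_of_disjoint hdisj]
      exact Finset.card_le_univ _
    have h1 := hdom v
    have h2 : ((univ.filter fun u => u ≠ v ∧ χ v u = c v).card : ℤ)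
        + ((univ.filter fun u => u ≠ v ∧ χ v u ≠ c v).card : ℤ) ≤ N := by
      exact_mod_cast hle
    linarith
  -- the set of same-class ordered pairs
  set P : Finset (V × V) := univ.filter fun q : V × V => c q.1 = c q.2 with hPdef
  have hP : (P.card : ℤ) = ∑ r : ZMod p, ((univ.filter fun v => c v = r).card : ℤ) ^ 2 := by
    have h1 : P.card = ∑ r : ZMod p, (P.filter fun q => c q.1 = r).card :=
      Finset.card_eq_sum_card_fiberwise (fun x _ => Finset.mem_univ _)
    rw [h1]
    push_cast
    refine Finset.sum_congr rfl fun r _ => ?_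
    have heq : (P.filter fun q => c q.1 = r)
        = (univ.filter fun v => c v = r) ×ˢ (univ.filter fun v => c v = r) := by
      ext q
      simp only [hPdef, mem_filter, mem_univ, true_and, Finset.mem_product]
      constructor
      · rintro ⟨h1, h2⟩
        exact ⟨h2, h2 ▸ h1.symm⟩
      · rintro ⟨h1, h2⟩
        exact ⟨h1.trans h2.symm, h1⟩
    rw [heq, Finset.card_product]
    push_cast
    ring
  -- cross pairs
  set X : Finset (V × V) := univ.filter fun q : V × V => ¬ c q.1 = c q.2 with hXdef
  have hsplit : (P.card : ℤ) + (X.card : ℤ) = (N : ℤ) ^ 2 := by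
    have := Finset.card_filter_add_card_filter_not
      (s := (univ : Finset (V × V))) (p := fun q : V × V => c q.1 = c q.2)
    have hcard : (univ : Finset (V × V)).card = N * N := by
      simp [Fintype.card_prod, hN]
    rw [hcard] at this
    have : (P.card : ℤ) + (X.card : ℤ) = (N : ℤ) * N := by exact_mod_cast this
    linarith [sq (N:ℤ)]
  -- bound X
  set X1 : Finset (V × V) := univ.filter fun q : V × V => q.1 ≠ q.2 ∧ χ q.2 q.1 ≠ c q.2
    with hX1def
  set X2 : Finset (V × V) := univ.filter fun q : V × V => q.2 ≠ q.1 ∧ χ q.1 q.2 ≠ c q.1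
    with hX2def
  have hsub : X ⊆ X1 ∪ X2 := by
    intro q hq
    simp only [hXdef, mem_filter, mem_univ, true_and] at hq
    have hne : q.1 ≠ q.2 := fun h => hq (h ▸ rfl)
    by_cases hc : χ q.2 q.1 = c q.2
    · refine Finset.mem_union_right _ ?_
      simp only [hX2def, mem_filter, mem_univ, true_and]
      refine ⟨hne.symm, ?_⟩
      rw [hsym q.1 q.2, hc]
      exact fun h => hq h.symm
    · refine Finset.mem_union_left _ ?_
      simp only [hX1def, mem_filter, mem_univ, true_and]
      exact ⟨hne, hc⟩
  have hX1 : (X1.card : ℤ) ≤ (α : ℤ) * N := by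
    have h1 : X1.card = ∑ v : V, (X1.filter fun q => q.2 = v).card :=
      Finset.card_eq_sum_card_fiberwise (fun x _ => Finset.mem_univ _)
    have h2 : ∀ v : V, ((X1.filter fun q => q.2 = v).card : ℤ) ≤ α := by
      intro v
      refine le_trans ?_ (hbad v)
      have : (X1.filter fun q => q.2 = v).card
          ≤ (univ.filter fun u => u ≠ v ∧ χ v u ≠ c v).card := by
        apply Finset.card_le_card_of_injOn (fun q => q.1)
        · intro q hq
          simp only [hX1def, Finset.mem_coe, mem_filter, mem_univ, true_and] at hq ⊢
          obtain ⟨⟨h1, h2⟩, h3⟩ := hq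
          subst h3
          exact ⟨h1, h2⟩
        · intro a ha b hb hab
          simp only [hX1def, mem_filter, mem_univ, true_and, Finset.coe_filter,
            Set.mem_setOf_eq] at ha hb
          exact Prod.ext hab (ha.2.trans hb.2.symm)
      exact_mod_cast this
    calc (X1.card : ℤ) = ∑ v : V, ((X1.filter fun q => q.2 = v).card : ℤ) := by
          rw [h1]; push_cast; ring
      _ ≤ ∑ _v : V, (α : ℤ) := Finset.sum_le_sum (fun v _ => h2 v)
      _ = (α : ℤ) * N := by simp [hN, mul_comm]
  have hX2 : (X2.card : ℤ) ≤ (α : ℤ) * N := by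
    have h1 : X2.card = ∑ v : V, (X2.filter fun q => q.1 = v).card :=
      Finset.card_eq_sum_card_fiberwise (fun x _ => Finset.mem_univ _)
    have h2 : ∀ v : V, ((X2.filter fun q => q.1 = v).card : ℤ) ≤ α := by
      intro v
      refine le_trans ?_ (hbad v)
      have : (X2.filter fun q => q.1 = v).card
          ≤ (univ.filter fun u => u ≠ v ∧ χ v u ≠ c v).card := by
        apply Finset.card_le_card_of_injOn (fun q => q.2)
        · intro q hq
          simp only [hX2def, Finset.mem_coe, mem_filter, mem_univ, true_and] at hq ⊢
          obtain ⟨⟨h1, h2⟩, h3⟩ := hq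
          subst h3
          exact ⟨h1, h2⟩
        · intro a ha b hb hab
          simp only [hX2def, mem_filter, mem_univ, true_and, Finset.coe_filter,
            Set.mem_setOf_eq] at ha hb
          exact Prod.ext (ha.2.trans hb.2.symm) hab
      exact_mod_cast this
    calc (X2.card : ℤ) = ∑ v : V, ((X2.filter fun q => q.1 = v).card : ℤ) := by
          rw [h1]; push_cast; ring
      _ ≤ ∑ _v : V, (α : ℤ) := Finset.sum_le_sum (fun v _ => h2 v)
      _ = (α : ℤ) * N := by simp [hN, mul_comm]
  have hXle : (X.card : ℤ) ≤ 2 * α * N := by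
    have h1 : X.card ≤ X1.card + X2.card :=
      le_trans (Finset.card_le_card hsub) (Finset.card_union_le _ _)
    have h2 : (X.card : ℤ) ≤ (X1.card : ℤ) + (X2.card : ℤ) := by exact_mod_cast h1
    linarith
  linarith [hP, hsplit, hXle]
end

section
/- Let G be a complete graph on at least n + α + 1 vertices with an edge coloring, and let l be a color such that every vertex of G is incident to at most α edges of colors other than l. Then G contains a copy of every forest F on n vertices all of whose edges are colored l (a monochromatic copy of F in color l). -/
/-!
Greedy embedding. A finite forest has a vertex with at most one neighbour; embed the rest of the
forest by induction and send that vertex to a vertex outside the image that is adjacent to the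
image of its neighbour. This works in any graph of minimum degree at least `|F| - 1`: the
neighbour's image has that many neighbours, and at most `|F| - 2` of them are already used. The
colour-`l` graph of `χ` has minimum degree at least `|G| - 1 - α ≥ n`.
-/

open Finset

namespace SimpleGraph

variable {α β : Type*}

lemma IsAcyclic.exists_neighborSet_subsingleton [Finite α] [Nonempty α] {G : SimpleGraph α}
    (hG : G.IsAcyclic) : ∃ x, (G.neighborSet x).Subsingleton := by
  obtain ⟨u, v, p, hp, hmax⟩ := Walk.exists_isPath_forall_isPath_length_le_length G
  have hsnd : ∀ w, G.Adj u w → w = p.snd := fun w hw ↦ hG.eq_snd_of_adj_start hp hw <| by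
    by_contra hws
    simpa using hmax _ _ _ (hp.cons hws (h := hw.symm))
  exact ⟨u, fun a ha b hb ↦ (hsnd a ha).trans (hsnd b hb).symm⟩

lemma isContained_of_copy_induce_compl_singleton {G : SimpleGraph α} {H : SimpleGraph β} {x : α}
    (f : Copy (G.induce {x}ᶜ) H) {y : β} (hy : y ∉ Set.range f)
    (hadj : ∀ a (ha : a ≠ x), G.Adj x a → H.Adj y (f ⟨a, ha⟩)) : G ⊑ H := by
  classical
  let g : α → β := fun a ↦ if h : a = x then y else f ⟨a, h⟩
  have hg : g.Injective := Function.Injective.dite (· = x) (f := fun _ ↦ y)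
    (fun a b _ ↦ Subtype.ext (a.2.trans b.2.symm)) f.injective
    (fun h ↦ hy ⟨_, h.symm⟩)
  refine isContained_iff_exists_le_comap.mpr ⟨⟨g, hg⟩, fun a b hab ↦ ?_⟩
  simp only [comap_adj, Function.Embedding.coeFn_mk, g]
  by_cases ha : a = x <;> by_cases hb : b = x
  · exact absurd (ha.trans hb.symm) hab.ne
  · subst ha; simpa [hb] using hadj b hb hab
  · subst hb; simpa [ha] using (hadj a ha hab.symm).symm
  · simpa [ha, hb] using f.toHom.map_adj (show (G.induce {x}ᶜ).Adj ⟨a, ha⟩ ⟨b, hb⟩ from hab)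

lemma exists_adj_notMem_range [Fintype α] [Fintype β] {H : SimpleGraph β} [DecidableRel H.Adj]
    (f : α ↪ β) (a : α) (h : Fintype.card α ≤ H.degree (f a)) :
    ∃ y, H.Adj (f a) y ∧ y ∉ Set.range f := by
  classical
  by_contra! hsub
  have hle : H.neighborFinset (f a) ⊆ (univ.map f).erase (f a) := fun y hy ↦ by
    rw [mem_neighborFinset] at hy
    obtain ⟨b, rfl⟩ := hsub y hy
    exact mem_erase.mpr ⟨hy.ne', mem_map_of_mem _ (mem_univ b)⟩
  have := card_le_card hle
  rw [card_erase_of_mem (mem_map_of_mem _ (mem_univ a)), card_map, card_univ,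
    card_neighborFinset_eq_degree] at this
  have : 0 < Fintype.card α := Fintype.card_pos_iff.mpr ⟨a⟩
  omega

theorem IsAcyclic.isContained_of_card_le_degree_add_one [Fintype α] [Fintype β] [Nonempty β]
    {F : SimpleGraph α} {H : SimpleGraph β} [DecidableRel H.Adj] (hF : F.IsAcyclic)
    (hH : ∀ v, Fintype.card α ≤ H.degree v + 1) : F ⊑ H := by
  induction hn : Fintype.card α generalizing α with
  | zero =>
    have := Fintype.card_eq_zero_iff.mp hn
    exact .of_isEmpty
  | succ n ih =>
    classical
    have : Nonempty α := Fintype.card_pos_iff.mp (by omega)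
    obtain ⟨x, hx⟩ := hF.exists_neighborSet_subsingleton
    have hcard : Fintype.card ({x}ᶜ : Set α) = n := by
      rw [Fintype.card_compl_set, hn, Set.card_singleton]; rfl
    obtain ⟨f⟩ := ih (hF.induce _) (fun v ↦ by have := hH v; omega) hcard
    obtain ⟨y, hy, hadj⟩ :
        ∃ y ∉ Set.range f, ∀ a (ha : a ≠ x), F.Adj x a → H.Adj y (f ⟨a, ha⟩) := by
      by_cases hb : ∃ b, F.Adj x b
      · obtain ⟨b, hb⟩ := hb
        obtain ⟨y, hyb, hy⟩ := exists_adj_notMem_range (H := H) f.toEmbedding ⟨b, hb.ne'⟩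
          (by have := hH (f.toEmbedding ⟨b, hb.ne'⟩); omega)
        exact ⟨y, hy, fun a ha hxa ↦ by obtain rfl := hx hxa hb; exact hyb.symm⟩
      · simp only [not_exists] at hb
        obtain ⟨y, hy⟩ : ∃ y, y ∉ Set.range f := by
          by_contra! hs
          have := Fintype.card_le_of_surjective _ hs
          have := hH (Classical.arbitrary β)
          have := H.degree_lt_card_verts (Classical.arbitrary β)
          omega
        exact ⟨y, hy, fun a _ hxa ↦ absurd hxa (hb a)⟩
    exact isContained_of_copy_induce_compl_singleton f hy hadj

lemma card_le_degree_fromRel_add_card_filter_add_one [Fintype β] [DecidableEq β] {C : Type*}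
    [DecidableEq C] (χ : β → β → C) (l : C) [DecidableRel (fromRel fun u w ↦ χ u w = l).Adj]
    (v : β) :
    Fintype.card β ≤
      (fromRel fun u w ↦ χ u w = l).degree v + #(univ.filter fun u ↦ u ≠ v ∧ χ v u ≠ l) + 1 := by
  have hcover : (univ : Finset β) ⊆ ((fromRel fun u w ↦ χ u w = l).neighborFinset v ∪
      univ.filter fun u ↦ u ≠ v ∧ χ v u ≠ l) ∪ {v} := by
    intro u _
    by_cases huv : u = v
    · simp [huv]
    by_cases hχ : χ v u = l
    · simp [huv, hχ, Ne.symm huv]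
    · simp [huv, hχ]
  calc Fintype.card β = #(univ : Finset β) := card_univ.symm
    _ ≤ _ := card_le_card hcover
    _ ≤ _ := card_union_le _ _
    _ ≤ _ := by grw [card_union_le, card_neighborFinset_eq_degree, card_singleton]

end SimpleGraph

open SimpleGraph in
theorem monochromatic_forest_embedding_general (n α : ℕ)
    (A : Type*) [Fintype A] (F : SimpleGraph A)
    (hforest : F.IsAcyclic) (hA : Fintype.card A = n)
    (V : Type*) [Fintype V] [DecidableEq V] (hV : n + α + 1 ≤ Fintype.card V)
    (C : Type*) [DecidableEq C] (l : C) (χ : V → V → C) (hsym : ∀ x y, χ x y = χ y x)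
    (hdom : ∀ v : V, (univ.filter fun u => u ≠ v ∧ χ v u ≠ l).card ≤ α) :
    ∃ f : A ↪ V, ∀ x y : A, F.Adj x y → χ (f x) (f y) = l := by
  classical
  have : Nonempty V := Fintype.card_pos_iff.mp (by omega)
  obtain ⟨f⟩ := hforest.isContained_of_card_le_degree_add_one (H := fromRel fun u w ↦ χ u w = l)
    fun v ↦ by have := card_le_degree_fromRel_add_card_filter_add_one χ l v; have := hdom v; omega
  refine ⟨f.toEmbedding, fun x y hxy ↦ ?_⟩
  obtain ⟨-, h | h⟩ := f.toHom.map_adj hxy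
  exacts [h, (hsym _ _).trans h]

/-- Greedy embedding: if every vertex of a large complete graph sees at most `α`
edges not colored `l`, then any forest on `n` vertices embeds monochromatically
in color `l`. -/
theorem monochromatic_forest_embedding (n α : ℕ) (hn : 1 ≤ n)
    (A : Type*) [Fintype A] [DecidableEq A] (F : SimpleGraph A)
    (hforest : F.IsAcyclic) (hA : Fintype.card A = n)
    (V : Type*) [Fintype V] [DecidableEq V] (hV : n + α + 1 ≤ Fintype.card V)
    (C : Type*) [DecidableEq C] (l : C) (χ : V → V → C) (hsym : ∀ x y, χ x y = χ y x)
    (hdom : ∀ v : V, (univ.filter fun u => u ≠ v ∧ χ v u ≠ l).card ≤ α) :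
    ∃ f : A ↪ V, ∀ x y : A, F.Adj x y → χ (f x) (f y) = l :=
  monochromatic_forest_embedding_general n α A F hforest hA V hV C l χ hsym hdom
end

section
/- Let F be a forest on n vertices with p | e(F), and suppose the edges of a complete graph K on at least n + α + 1 vertices are colored by ℤ/pℤ such that some color l satisfies: every vertex is incident to at most α edges not colored l. Then K contains a zero-sum copy of F, i.e., a copy of F whose edge colors sum to 0 in ℤ/pℤ. -/
/-!
The edges of colour `l` form a graph `H` in which every vertex has degree at least
`|V| - 1 - α ≥ n`. A forest on `n` vertices embeds into any graph of minimum degree at least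
`n - 1`: delete a leaf, embed the rest, and send the leaf to a neighbour of its parent's image
that is not yet used. The resulting copy of `F` is monochromatic, so its colour sum is
`e(F) · l = 0` in `ZMod p`.
-/

open Finset SimpleGraph

theorem exists_notMem_range_of_card_lt_card {A V : Type*} [Fintype A] [Fintype V] (g : A → V)
    (hcard : Fintype.card A < Fintype.card V) : ∃ v, v ∉ Set.range g := by
  by_contra! hsurj
  exact (Fintype.card_le_of_surjective g hsurj).not_gt hcard

namespace SimpleGraph

variable {A V : Type*} {F : SimpleGraph A} {H : SimpleGraph V}

theorem IsAcyclic.exists_degree_le_one [Fintype A] [Nonempty A] [DecidableRel F.Adj]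
    (hF : F.IsAcyclic) : ∃ a, F.degree a ≤ 1 := by
  obtain ⟨u, v, p, hp, hmax⟩ := Walk.exists_isPath_forall_isPath_length_le_length F
  refine ⟨u, card_le_one.mpr fun w hw w' hw' => ?_⟩
  rw [mem_neighborFinset] at hw hw'
  -- the start of a longest path is a leaf: a neighbour off the path would extend it
  have mem_support : ∀ x, F.Adj u x → x ∈ p.support := fun x hx => by
    by_contra hxp
    have := hmax _ _ _ (hp.cons hxp (h := hx.symm))
    simp at this
  rw [hF.eq_snd_of_adj_start hp hw (mem_support w hw),
    hF.eq_snd_of_adj_start hp hw' (mem_support w' hw')]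

theorem isContained_of_copy_induce_compl_singleton_s12 {a : A} (g : (F.induce {a}ᶜ).Copy H)
    {v : V} (hv : v ∉ Set.range g)
    (hadj : ∀ b (hb : b ≠ a), F.Adj a b → H.Adj (g ⟨b, hb⟩) v) : F ⊑ H := by
  classical
  let f : A → V := fun x => if hx : x = a then v else g ⟨x, hx⟩
  have hf_ne : ∀ x (hx : x ≠ a), f x = g ⟨x, hx⟩ := fun x hx => dif_neg hx
  have hf_inj : Function.Injective f := by
    intro x y hxy
    by_cases hx : x = a <;> by_cases hy : y = a
    · rw [hx, hy]
    · simp only [f, hx, hy, dite_true, dite_false] at hxy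
      exact (hv ⟨_, hxy.symm⟩).elim
    · simp only [f, hx, hy, dite_true, dite_false] at hxy
      exact (hv ⟨_, hxy⟩).elim
    · rw [hf_ne x hx, hf_ne y hy] at hxy
      exact congrArg Subtype.val (g.injective hxy)
  refine ⟨⟨⟨f, fun {x y} hxy => ?_⟩, hf_inj⟩⟩
  by_cases hx : x = a <;> by_cases hy : y = a
  · exact (hxy.ne (hx.trans hy.symm)).elim
  · subst hx; simpa [f, hy] using (hadj y hy hxy).symm
  · subst hy; simpa [f, hx] using hadj x hx hxy.symm
  · rw [hf_ne x hx, hf_ne y hy]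
    exact g.toHom.map_adj (show (F.induce {a}ᶜ).Adj ⟨x, hx⟩ ⟨y, hy⟩ from hxy)

theorem exists_adj_notMem_range_of_card_le_degree [Fintype A] [Fintype V] [DecidableRel H.Adj]
    (g : A → V) {w : V} (hw : w ∈ Set.range g) (hdeg : Fintype.card A ≤ H.degree w) :
    ∃ v, H.Adj w v ∧ v ∉ Set.range g := by
  classical
  obtain ⟨x, rfl⟩ := hw
  have hA : 0 < Fintype.card A := Fintype.card_pos_iff.mpr ⟨x⟩
  -- `g x` is in the range but is not its own neighbour
  have hlt : #((univ.image g).erase (g x)) < #(H.neighborFinset (g x)) :=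
    calc #((univ.image g).erase (g x)) = #(univ.image g) - 1 :=
          card_erase_of_mem (mem_image_of_mem g (mem_univ x))
      _ ≤ Fintype.card A - 1 := Nat.sub_le_sub_right card_image_le 1
      _ < Fintype.card A := Nat.sub_one_lt_of_lt hA
      _ ≤ #(H.neighborFinset (g x)) := by rwa [card_neighborFinset_eq_degree]
  obtain ⟨v, hv, hvt⟩ := exists_mem_notMem_of_card_lt_card hlt
  rw [mem_neighborFinset] at hv
  refine ⟨v, hv, ?_⟩
  rintro ⟨y, rfl⟩
  exact hvt (mem_erase.mpr ⟨hv.ne', mem_image_of_mem g (mem_univ y)⟩)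

theorem IsAcyclic.isContained_of_card_le_minDegree_add_one [Fintype A] [Fintype V] [Nonempty V]
    [DecidableRel H.Adj] (hF : F.IsAcyclic) (hcard : Fintype.card A ≤ H.minDegree + 1) :
    F ⊑ H := by
  induction hn : Fintype.card A generalizing A with
  | zero =>
    have := Fintype.card_eq_zero_iff.mp hn
    exact IsContained.of_isEmpty
  | succ n ih =>
    have := Classical.decEq A
    have := Classical.decRel F.Adj
    have : Nonempty A := Fintype.card_pos_iff.mp (by omega)
    obtain ⟨a, ha⟩ := hF.exists_degree_le_one
    have hn' : Fintype.card ↥({a}ᶜ : Set A) = n := by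
      rw [Fintype.card_compl_set, Set.card_singleton]; omega
    obtain ⟨g⟩ := ih (hF.induce _) (by omega) hn'
    by_cases hb : ∃ b, F.Adj a b
    · obtain ⟨b, hab⟩ := hb
      obtain ⟨v, hbv, hv⟩ :=
        exists_adj_notMem_range_of_card_le_degree (H := H) g ⟨⟨b, hab.ne'⟩, rfl⟩
          (by have := H.minDegree_le_degree (g ⟨b, hab.ne'⟩); omega)
      refine isContained_of_copy_induce_compl_singleton_s12 g hv fun c hc hac => ?_
      obtain rfl : c = b := card_le_one.mp ha c (by simpa) b (by simpa)
      exact hbv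
    · obtain ⟨v, hv⟩ :=
        exists_notMem_range_of_card_lt_card g (by have := H.minDegree_lt_card; omega)
      exact isContained_of_copy_induce_compl_singleton_s12 g hv fun c _ hac => (hb ⟨c, hac⟩).elim

theorem card_le_degree_add_one_add_card [Fintype V] [DecidableRel H.Adj] (v : V) {s : Finset V}
    (hs : ∀ u, u ≠ v → ¬H.Adj v u → u ∈ s) : Fintype.card V ≤ H.degree v + 1 + #s := by
  classical
  have hcover : (univ : Finset V) ⊆ insert v (H.neighborFinset v ∪ s) := fun u _ => by
    by_cases huv : u = v
    · exact mem_insert.mpr (.inl huv)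
    by_cases hadj : H.Adj v u
    · exact mem_insert_of_mem (mem_union_left _ ((mem_neighborFinset _ _ _).mpr hadj))
    · exact mem_insert_of_mem (mem_union_right _ (hs u huv hadj))
  calc Fintype.card V ≤ #(insert v (H.neighborFinset v ∪ s)) := card_le_card hcover
    _ ≤ #(H.neighborFinset v ∪ s) + 1 := card_insert_le _ _
    _ ≤ H.degree v + 1 + #s := by
      have := card_union_le (H.neighborFinset v) s
      rw [card_neighborFinset_eq_degree] at this
      omega

end SimpleGraph

theorem zero_sum_forest_from_dominant_general (p : ℕ) (n α : ℕ)
    (A : Type*) [Fintype A] (F : SimpleGraph A) [DecidableRel F.Adj]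
    (hforest : F.IsAcyclic) (hA : Fintype.card A = n)
    (hdiv : p ∣ F.edgeFinset.card)
    (V : Type*) [Fintype V] [DecidableEq V] (hV : n + α + 1 ≤ Fintype.card V)
    (χ : V → V → ZMod p) (hsym : ∀ x y, χ x y = χ y x) (l : ZMod p)
    (hdom : ∀ v : V, (univ.filter fun u => u ≠ v ∧ χ v u ≠ l).card ≤ α) :
    ∃ f : A ↪ V,
      ∑ e ∈ F.edgeFinset,
        Sym2.lift ⟨fun x y => χ (f x) (f y), fun x y => hsym (f x) (f y)⟩ e = 0 := by
  classical
  let H := SimpleGraph.fromRel fun u v => χ u v = l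
  have hdeg : ∀ v, n ≤ H.degree v := fun v => by
    have := card_le_degree_add_one_add_card (H := H) v
      (s := univ.filter fun u => u ≠ v ∧ χ v u ≠ l) fun u huv hnadj =>
      mem_filter.mpr ⟨mem_univ u, huv, fun hl => hnadj (by simp [H, huv.symm, hl])⟩
    have := hdom v
    omega
  have : Nonempty V := Fintype.card_pos_iff.mp (by omega)
  obtain ⟨f⟩ := hforest.isContained_of_card_le_minDegree_add_one (H := H)
    (by have := H.le_minDegree_of_forall_le_degree n hdeg; omega)
  have hmono : ∀ e ∈ F.edgeFinset,
      Sym2.lift ⟨fun x y => χ (f x) (f y), fun x y => hsym (f x) (f y)⟩ e = l := by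
    intro e he
    induction e using Sym2.ind with
    | _ x y =>
      obtain ⟨-, hxy | hyx⟩ := (fromRel_adj _ _ _).mp (f.toHom.map_adj (mem_edgeFinset.mp he))
      exacts [hxy, (hsym _ _).trans hyx]
  refine ⟨f.toEmbedding, (sum_congr rfl hmono).trans ?_⟩
  rw [sum_const, nsmul_eq_mul, (ZMod.natCast_eq_zero_iff _ _).mpr hdiv, zero_mul]

/-- A near-monochromatic coloring of a large complete graph contains a zero-sum copy
of any forest `F` with `p ∣ e(F)`. -/
theorem zero_sum_forest_from_dominant (p : ℕ) (hp : p.Prime) (n α : ℕ)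
    (A : Type*) [Fintype A] [DecidableEq A] (F : SimpleGraph A) [DecidableRel F.Adj]
    (hforest : F.IsAcyclic) (hA : Fintype.card A = n)
    (hdiv : p ∣ F.edgeFinset.card)
    (V : Type*) [Fintype V] [DecidableEq V] (hV : n + α + 1 ≤ Fintype.card V)
    (χ : V → V → ZMod p) (hsym : ∀ x y, χ x y = χ y x) (l : ZMod p)
    (hdom : ∀ v : V, (univ.filter fun u => u ≠ v ∧ χ v u ≠ l).card ≤ α) :
    ∃ f : A ↪ V,
      ∑ e ∈ F.edgeFinset,
        Sym2.lift ⟨fun x y => χ (f x) (f y), fun x y => hsym (f x) (f y)⟩ e = 0 :=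
  zero_sum_forest_from_dominant_general p n α A F hforest hA hdiv V hV χ hsym l hdom
end

section
/- For every prime p ≥ 3 and every n with p | (n − 1), the zero-sum Ramsey number of the star K_{1,n−1} satisfies R(K_{1,n−1}, ℤ/pℤ) ≥ n + p − 1; i.e., there is a ℤ/pℤ-edge-coloring of K_{n+p−2} containing no zero-sum copy of the star with n − 1 edges. -/
/-!
Colour the edges of a `(p - 1)`-regular graph on `n + p - 2` vertices by `1` and all other edges
by `0`. The colour sum of a star with centre `v` and leaf set `S` counts the neighbours of `v` in
`S`: at most `p - 1`, and at least one, since only `p - 2` vertices lie outside `S ∪ {v}`.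
Such a graph exists because `p - 1` is even: take the circulant graph on `ℤ/(n + p - 2)` with
jumps `±1, …, ±(p - 1)/2`.
-/

open Finset Pointwise

namespace SimpleGraph

variable {V : Type*} [Fintype V] [DecidableEq V] (G : SimpleGraph V) [DecidableRel G.Adj]

omit [DecidableEq V] in
theorem card_filter_adj_le_degree (v : V) (S : Finset V) : #{u ∈ S | G.Adj v u} ≤ G.degree v := by
  rw [← card_neighborFinset_eq_degree, neighborFinset_eq_filter]
  exact card_le_card (filter_subset_filter _ (subset_univ S))

theorem degree_add_card_lt_card_filter_adj_add_card {v : V} {S : Finset V} (hv : v ∉ S) :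
    G.degree v + #S < #{u ∈ S | G.Adj v u} + Fintype.card V := by
  have h_in : #(G.neighborFinset v ∩ S) = #{u ∈ S | G.Adj v u} := by
    congr 1; ext u; simp [and_comm]
  have h_out : #(G.neighborFinset v \ S) ≤ #(univ \ insert v S) :=
    card_le_card fun u hu ↦ by
      simp only [mem_sdiff, mem_neighborFinset, mem_univ, mem_insert, true_and] at hu ⊢
      exact fun h ↦ h.elim (fun h ↦ G.loopless.irrefl u (h ▸ hu.1)) hu.2
  have h_card : #(univ \ insert v S) + #S + 1 = Fintype.card V := by
    rw [add_assoc, ← card_insert_of_notMem hv, card_sdiff_add_card_eq_card (subset_univ _),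
      card_univ]
  have := card_inter_add_card_sdiff (G.neighborFinset v) S
  rw [card_neighborFinset_eq_degree, h_in] at this
  omega

end SimpleGraph

section Circulant

variable {A : Type*} [AddGroup A] [Fintype A] [DecidableEq A]

theorem SimpleGraph.circulantGraph_isRegularOfDegree {s : Finset A} (h0 : (0 : A) ∉ s)
    (hs : Disjoint s (-s)) : (circulantGraph (s : Set A)).IsRegularOfDegree (2 * #s) := by
  intro v
  have : (circulantGraph (s : Set A)).neighborFinset v = (s ∪ -s).map (addRightEmbedding v) := by
    ext u
    simp only [mem_neighborFinset, circulantGraph_adj, mem_map, mem_union, mem_neg',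
      addRightEmbedding_apply, mem_coe]
    constructor
    · rintro ⟨-, h | h⟩
      · exact ⟨u - v, Or.inr (by rwa [neg_sub]), sub_add_cancel u v⟩
      · exact ⟨u - v, Or.inl h, sub_add_cancel u v⟩
    · rintro ⟨t, ht, rfl⟩
      have ht0 : t ≠ 0 := by rintro rfl; simp_all
      refine ⟨fun h ↦ ht0 (by simpa using h), ?_⟩
      rw [sub_add_cancel_right, add_sub_cancel_right]
      exact ht.symm
  rw [← card_neighborFinset_eq_degree, this, card_map, card_union_of_disjoint hs, card_neg, two_mul]

end Circulant

theorem Fin.disjoint_Ioc_zero_neg {N k : ℕ} [NeZero N] (hk : 2 * k < N) :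
    Disjoint (Ioc 0 (⟨k, by omega⟩ : Fin N)) (-Ioc 0 (⟨k, by omega⟩ : Fin N)) := by
  rw [disjoint_left]
  intro x hx hx'
  rw [mem_neg', mem_Ioc] at hx'
  rw [mem_Ioc] at hx
  simp only [Fin.lt_def, Fin.le_def, Fin.val_neg, Fin.val_zero] at hx hx'
  split_ifs at hx' <;> omega

theorem star_zero_sum_lower_bound_general (p : ℕ) (hp : p.Prime) (hp3 : 3 ≤ p)
    (n : ℕ) (hn : 2 ≤ n) :
    ∃ χ : Fin (n + p - 2) → Fin (n + p - 2) → ZMod p,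
      (∀ x y, χ x y = χ y x) ∧
      ∀ v : Fin (n + p - 2), ∀ S : Finset (Fin (n + p - 2)),
        v ∉ S → S.card = n - 1 → ∑ u ∈ S, χ v u ≠ 0 := by
  obtain ⟨k, hk⟩ := hp.odd_of_ne_two (by omega)
  have : NeZero (n + p - 2) := ⟨by omega⟩
  let G := SimpleGraph.circulantGraph
    ((Ioc 0 ⟨k, by omega⟩ : Finset (Fin (n + p - 2))) : Set (Fin (n + p - 2)))
  have hG : G.IsRegularOfDegree (2 * k) := by
    convert SimpleGraph.circulantGraph_isRegularOfDegree left_notMem_Ioc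
      (Fin.disjoint_Ioc_zero_neg (N := n + p - 2) (k := k) (by omega)) using 2
    rw [Fin.card_Ioc, Fin.val_zero, Nat.sub_zero]
  refine ⟨fun x y ↦ if G.Adj x y then 1 else 0, fun x y ↦ by simp only [G.adj_comm], ?_⟩
  intro v S hv hS
  rw [sum_boole]
  have h_le := G.card_filter_adj_le_degree v S
  have h_ge := G.degree_add_card_lt_card_filter_adj_add_card hv
  rw [hG.degree_eq] at h_le h_ge
  rw [Fintype.card_fin] at h_ge
  exact (ZMod.natCast_eq_zero_iff _ _).not.mpr (Nat.not_dvd_of_pos_of_lt (by omega) (by omega))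

/-- Lower bound for stars: for `p ≥ 3` prime and `p ∣ n − 1` (with `n ≥ 2`), there is a
`ZMod p`-edge-coloring of the complete graph on `n + p − 2` vertices with no zero-sum
copy of the star `K_{1,n−1}`; hence `R(K_{1,n−1}, ℤ_p) ≥ n + p − 1`. -/
theorem star_zero_sum_lower_bound (p : ℕ) (hp : p.Prime) (hp3 : 3 ≤ p)
    (n : ℕ) (hn : 2 ≤ n) (hdiv : p ∣ n - 1) :
    ∃ χ : Fin (n + p - 2) → Fin (n + p - 2) → ZMod p,
      (∀ x y, χ x y = χ y x) ∧
      ∀ v : Fin (n + p - 2), ∀ S : Finset (Fin (n + p - 2)),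
        v ∉ S → S.card = n - 1 → ∑ u ∈ S, χ v u ≠ 0 :=
  star_zero_sum_lower_bound_general p hp hp3 n hn
end

section
/- Let F be a forest with at least 2(p − 1) leaves (p ≥ 2). Then one can choose parents v₁, …, v_m and, for each i, a set Lᵢ of aᵢ ≥ 1 leaf-children of vᵢ, such that a₁ + ⋯ + a_m = p − 1 and no vᵢ belongs to any Lⱼ. -/
open Finset

section Aux

variable {V : Type*} [Fintype V] [DecidableEq V] (F : SimpleGraph V) [DecidableRel F.Adj]

/-- The unique neighbor of a degree-one vertex (junk value otherwise). -/
noncomputable def leafParent (x : V) : V :=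
  if h : (F.neighborFinset x).Nonempty then h.choose else x

omit [DecidableEq V] in
lemma leafParent_mem {F : SimpleGraph V} [DecidableRel F.Adj] {x : V} (hx : F.degree x = 1) :
    leafParent F x ∈ F.neighborFinset x := by
  have h : (F.neighborFinset x).Nonempty := by
    rw [← Finset.card_pos]
    change 0 < F.degree x
    omega
  rw [leafParent, dif_pos h]
  exact h.choose_spec

lemma adj_leafParent {F : SimpleGraph V} [DecidableRel F.Adj] {x : V} (hx : F.degree x = 1) :
    F.Adj x (leafParent F x) :=
  (SimpleGraph.mem_neighborFinset F x _).mp (leafParent_mem hx)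

lemma eq_leafParent {F : SimpleGraph V} [DecidableRel F.Adj] {x y : V} (hx : F.degree x = 1)
    (hxy : F.Adj x y) : y = leafParent F x := by
  obtain ⟨a, ha⟩ := Finset.card_eq_one.mp (hx : (F.neighborFinset x).card = 1)
  have h1 : y ∈ F.neighborFinset x := (SimpleGraph.mem_neighborFinset F x y).mpr hxy
  have h2 := leafParent_mem hx
  rw [ha, Finset.mem_singleton] at h1 h2
  rw [h1, h2]

lemma leafParent_leafParent {F : SimpleGraph V} [DecidableRel F.Adj] {x : V}
    (hx : F.degree x = 1) (hp : F.degree (leafParent F x) = 1) :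
    leafParent F (leafParent F x) = x := by
  have h : F.Adj (leafParent F x) x := (adj_leafParent hx).symm
  exact (eq_leafParent hp h).symm

lemma leafParent_ne {F : SimpleGraph V} [DecidableRel F.Adj] {x : V} (hx : F.degree x = 1) :
    leafParent F x ≠ x := by
  intro h
  have h2 := adj_leafParent hx
  rw [h] at h2
  exact F.loopless.irrefl x h2

end Aux

/-- A bushy forest (at least `2(p−1)` leaves) admits a choice of parents `v₁, …, v_m`
and pairwise disjoint nonempty sets `Lᵢ` of leaf-children of `vᵢ` with
`|L₁| + ⋯ + |L_m| = p − 1` such that no selected parent is a selected leaf. -/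
theorem bushy_forest_leaf_selection (p : ℕ) (hp : 2 ≤ p) (V : Type*) [Fintype V]
    [DecidableEq V] (F : SimpleGraph V) [DecidableRel F.Adj]
    (hforest : F.IsAcyclic)
    (hbushy : 2 * (p - 1) ≤ (univ.filter fun v => F.degree v = 1).card) :
    ∃ (m : ℕ) (v : Fin m → V) (L : Fin m → Finset V),
      Function.Injective v ∧
      (∀ i, (L i).Nonempty) ∧
      (∀ i, ∀ x ∈ L i, F.degree x = 1 ∧ F.Adj (v i) x) ∧
      (∀ i j, i ≠ j → Disjoint (L i) (L j)) ∧
      (∑ i, (L i).card = p - 1) ∧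
      (∀ i j, v i ∉ L j) := by
  classical
  set π := leafParent F with hπ
  set S := univ.filter fun v => F.degree v = 1 with hS
  have hSdeg : ∀ x ∈ S, F.degree x = 1 := by
    intro x hx; exact (Finset.mem_filter.mp hx).2
  have hSmem : ∀ x, F.degree x = 1 → x ∈ S := by
    intro x hx; exact Finset.mem_filter.mpr ⟨Finset.mem_univ x, hx⟩
  let e := Fintype.equivFin V
  set A := S.filter (fun x => π x ∉ S) with hA
  set Bp := S.filter (fun x => π x ∈ S ∧ e x < e (π x)) with hBp
  set Bm := S.filter (fun x => π x ∈ S ∧ e (π x) < e x) with hBm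
  have hpp : ∀ x ∈ S, π x ∈ S → π (π x) = x := by
    intro x hx hpx
    exact leafParent_leafParent (hSdeg x hx) (hSdeg _ hpx)
  -- Bm is the image of Bp under π
  have himg : Bm = Bp.image π := by
    ext y
    simp only [hBm, hBp, Finset.mem_image, Finset.mem_filter]
    constructor
    · rintro ⟨hyS, hpyS, hlt⟩
      refine ⟨π y, ⟨hpyS, ?_, ?_⟩, hpp y hyS hpyS⟩
      · rw [hpp y hyS hpyS]; exact hyS
      · rw [hpp y hyS hpyS]; exact hlt
    · rintro ⟨x, ⟨hxS, hpxS, hlt⟩, rfl⟩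
      exact ⟨hpxS, by rw [hpp x hxS hpxS]; exact hxS, by rw [hpp x hxS hpxS]; exact hlt⟩
  have hinjBp : Set.InjOn π Bp := by
    intro x hx y hy hxy
    rw [Finset.mem_coe, hBp, Finset.mem_filter] at hx hy
    have := hpp x hx.1 hx.2.1
    rw [hxy, hpp y hy.1 hy.2.1] at this
    exact this.symm
  have hcardBm : Bm.card = Bp.card := by
    rw [himg, Finset.card_image_of_injOn hinjBp]
  -- S is the disjoint union of A, Bp, Bm
  have hne : ∀ x ∈ S, e x ≠ e (π x) := by
    intro x hx h
    exact leafParent_ne (hSdeg x hx) (e.injective h.symm)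
  have hdisjABp : Disjoint A Bp := by
    rw [Finset.disjoint_left]
    intro x hx hx'
    rw [hA, Finset.mem_filter] at hx
    rw [hBp, Finset.mem_filter] at hx'
    exact hx.2 hx'.2.1
  have hdisjABm : Disjoint A Bm := by
    rw [Finset.disjoint_left]
    intro x hx hx'
    rw [hA, Finset.mem_filter] at hx
    rw [hBm, Finset.mem_filter] at hx'
    exact hx.2 hx'.2.1
  have hdisjBpBm : Disjoint Bp Bm := by
    rw [Finset.disjoint_left]
    intro x hx hx'
    rw [hBp, Finset.mem_filter] at hx
    rw [hBm, Finset.mem_filter] at hx'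
    exact absurd hx.2.2 (not_lt.mpr hx'.2.2.le)
  have hunion : S = A ∪ Bp ∪ Bm := by
    ext x
    simp only [hA, hBp, hBm, Finset.mem_union, Finset.mem_filter]
    constructor
    · intro hx
      by_cases h1 : π x ∈ S
      · rcases lt_or_gt_of_ne (hne x hx) with h | h
        · exact Or.inl (Or.inr ⟨hx, h1, h⟩)
        · exact Or.inr ⟨hx, h1, h⟩
      · exact Or.inl (Or.inl ⟨hx, h1⟩)
    · rintro ((⟨hx, _⟩ | ⟨hx, _⟩) | ⟨hx, _⟩) <;> exact hx
  have hcardS : S.card = A.card + Bp.card + Bm.card := by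
    rw [hunion, Finset.card_union_of_disjoint, Finset.card_union_of_disjoint hdisjABp]
    exact Finset.disjoint_union_left.mpr ⟨hdisjABm, hdisjBpBm⟩
  set C := A ∪ Bp with hC
  have hcardC : p - 1 ≤ C.card := by
    rw [hC, Finset.card_union_of_disjoint hdisjABp]
    omega
  have hCprop : ∀ x ∈ C, π x ∉ C := by
    intro x hx hx'
    rw [hC, Finset.mem_union] at hx hx'
    rcases hx with hx | hx
    · rw [hA, Finset.mem_filter] at hx
      rcases hx' with hx' | hx'
      · rw [hA, Finset.mem_filter] at hx'; exact hx.2 hx'.1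
      · rw [hBp, Finset.mem_filter] at hx'; exact hx.2 hx'.1
    · rw [hBp, Finset.mem_filter] at hx
      rcases hx' with hx' | hx'
      · rw [hA, Finset.mem_filter] at hx'
        exact hx'.2 (by rw [hpp x hx.1 hx.2.1]; exact hx.1)
      · rw [hBp, Finset.mem_filter] at hx'
        have := hx'.2.2
        rw [hpp x hx.1 hx.2.1] at this
        exact absurd hx.2.2 (not_lt.mpr this.le)
  obtain ⟨T, hTC, hTcard⟩ := Finset.exists_subset_card_eq hcardC
  have hTprop : ∀ x ∈ T, π x ∉ T := fun x hx hx' => hCprop x (hTC hx) (hTC hx')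
  have hTS : ∀ x ∈ T, x ∈ S := by
    intro x hx
    have := hTC hx
    rw [hC, Finset.mem_union] at this
    rcases this with h | h
    · exact (Finset.mem_filter.mp h).1
    · exact (Finset.mem_filter.mp h).1
  -- group T by parent
  set P := T.image π with hP
  refine ⟨P.card, fun i => (P.equivFin.symm i : V), fun i => T.filter (fun t => π t = (P.equivFin.symm i : V)), ?_, ?_, ?_, ?_, ?_, ?_⟩
  · intro i j hij
    exact P.equivFin.symm.injective (Subtype.ext hij)
  · intro i
    have hmem : ((P.equivFin.symm i : V)) ∈ P := (P.equivFin.symm i).2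
    obtain ⟨t, ht, htp⟩ := Finset.mem_image.mp hmem
    exact ⟨t, Finset.mem_filter.mpr ⟨ht, htp⟩⟩
  · intro i x hx
    rw [Finset.mem_filter] at hx
    refine ⟨hSdeg x (hTS x hx.1), ?_⟩
    have h : F.Adj (π x) x := (adj_leafParent (hSdeg x (hTS x hx.1))).symm
    rw [hx.2] at h
    exact h
  · intro i j hij
    rw [Finset.disjoint_left]
    intro x hx hx'
    rw [Finset.mem_filter] at hx hx'
    exact hij (P.equivFin.symm.injective (Subtype.ext (hx.2 ▸ hx'.2 ▸ rfl))) |>.elim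
  · have hfib : T.card = ∑ b ∈ P, (T.filter (fun t => π t = b)).card :=
      Finset.card_eq_sum_card_fiberwise (fun x hx => Finset.mem_image_of_mem π hx)
    have hsum : ∑ i, (T.filter (fun t => π t = (P.equivFin.symm i : V))).card
        = ∑ b ∈ P, (T.filter (fun t => π t = b)).card := by
      rw [← Finset.sum_attach P (fun b => (T.filter (fun t => π t = b)).card)]
      exact Fintype.sum_equiv P.equivFin.symm _ _ (fun i => rfl)
    rw [hsum, ← hfib, hTcard]
  · intro i j hmem
    rw [Finset.mem_filter] at hmem
    have hPmem : ((P.equivFin.symm i : V)) ∈ P := (P.equivFin.symm i).2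
    obtain ⟨t, ht, htp⟩ := Finset.mem_image.mp hPmem
    exact hTprop t ht (by rw [htp]; exact hmem.1)
end
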